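/- Let q ≥ 2 be a prime power. Then S(2m) ∼ ( θ₃(q^{−1}) / K_q ) · q^{m²} and S(2m+1) ∼ ( θ₂(q^{−1}) / K_q ) · q^{(m+1/2)²} as m → ∞; that is, lim_{m→∞} S(2m) · K_q / ( θ₃(q^{−1}) · q^{m²} ) = 1 and lim_{m→∞} S(2m+1) · K_q / ( θ₂(q^{−1}) · q^{(m+1/2)²} ) = 1. -/

import Mathlib

open Filter Matrix
open scoped Topology

/-- The `q`-binomial coefficient `binom(n,k)_q = ∏_{j=0}^{k-1} (q^{n-j}-1)/(q^{k-j}-1)`. -/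
noncomputable def qBinom (q n k : ℕ) : ℝ :=
  ∏ j ∈ Finset.range k, ((q : ℝ) ^ (n - j) - 1) / ((q : ℝ) ^ (k - j) - 1)

/-- `S(n) = ∑_{k=0}^n binom(n,k)_q`. -/
noncomputable def Sq (q n : ℕ) : ℝ := ∑ k ∈ Finset.range (n + 1), qBinom q n k

/-- `K_q = ∏_{j=1}^∞ (1 - q^{-j})`. -/
noncomputable def Kq (q : ℕ) : ℝ := ∏' j : ℕ, (1 - ((q : ℝ))⁻¹ ^ (j + 1))

/-- `K_q(k) = ∏_{j=1}^{k} (1 - q^{-j})`. -/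
noncomputable def KqTrunc (q k : ℕ) : ℝ := ∏ j ∈ Finset.range k, (1 - ((q : ℝ))⁻¹ ^ (j + 1))

/-- Jacobi theta constant `θ₂(w) = ∑_{k∈ℤ} w^{(k+1/2)²}`. -/
noncomputable def theta2 (w : ℝ) : ℝ := ∑' k : ℤ, w ^ (((k : ℝ) + 1/2) ^ 2)

/-- Jacobi theta constant `θ₃(w) = ∑_{k∈ℤ} w^{k²}`. -/
noncomputable def theta3 (w : ℝ) : ℝ := ∑' k : ℤ, w ^ ((k : ℝ) ^ 2)

/-- Condition (⋆): `n²/4 − ε·n + A·√n − k(n)(n−k(n)) → −∞`. -/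
def StarCond (A ε : ℝ) (k : ℕ → ℕ) : Prop :=
  Tendsto (fun n : ℕ =>
    (n : ℝ) ^ 2 / 4 - ε * n + A * Real.sqrt n - (k n : ℝ) * ((n : ℝ) - (k n : ℝ)))
    atTop atBot

/-- The set of permutation matrices inside `GL n F`. -/
def permSet (F : Type) [Field F] (n : ℕ) : Set (GL (Fin n) F) :=
  {M | ∃ σ : Equiv.Perm (Fin n), (M : Matrix (Fin n) (Fin n) F) = σ.permMatrix F}

/-- The set of invertible diagonal matrices inside `GL n F`. -/
def diagSet (F : Type) [Field F] (n : ℕ) : Set (GL (Fin n) F) :=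
  {M | ∃ d : Fin n → F, (M : Matrix (Fin n) (Fin n) F) = Matrix.diagonal d}

/-- The permutation group: subgroup of `GL n F` formed by the permutation matrices. -/
def PermGroup (F : Type) [Field F] (n : ℕ) : Subgroup (GL (Fin n) F) :=
  Subgroup.closure (permSet F n)

/-- The monomial group: subgroup of `GL n F` generated by permutation and diagonal matrices. -/
def MonomialGroup (F : Type) [Field F] (n : ℕ) : Subgroup (GL (Fin n) F) :=
  Subgroup.closure (permSet F n ∪ diagSet F n)

/-- Number of orbits of a subgroup `G ≤ GL n F` acting on the Grassmannian of
`k`-dimensional subspaces of `F^n` (by taking images of subspaces). -/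
noncomputable def numClassesDim {n : ℕ} (F : Type) [Field F]
    (G : Subgroup (GL (Fin n) F)) (k : ℕ) : ℕ :=
  Nat.card (Quot (fun V W : {V : Submodule F (Fin n → F) // Module.finrank F V = k} =>
    ∃ M ∈ G, Submodule.map (Matrix.toLin' (M : Matrix (Fin n) (Fin n) F)) V.1 = W.1))

/-- Number of orbits of a subgroup `G ≤ GL n F` acting on the set of all subspaces of `F^n`. -/
noncomputable def numClasses {n : ℕ} (F : Type) [Field F]
    (G : Subgroup (GL (Fin n) F)) : ℕ :=
  Nat.card (Quot (fun V W : Submodule F (Fin n → F) =>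
    ∃ M ∈ G, Submodule.map (Matrix.toLin' (M : Matrix (Fin n) (Fin n) F)) V = W))

/-- Semilinear orbit relation: `W` is the image of `V` under the semilinear transformation
given by applying the field automorphism `σ` componentwise followed by a monomial matrix. -/
def semiRel (F : Type) [Field F] (n : ℕ) (V W : Submodule F (Fin n → F)) : Prop :=
  ∃ σ : F ≃+* F, ∃ M ∈ MonomialGroup F n,
    (W : Set (Fin n → F)) =
      (fun x => Matrix.mulVec (M : Matrix (Fin n) (Fin n) F) (fun i => σ (x i))) '' (V : Set (Fin n → F))

/-- Number of semilinear equivalence classes of `k`-dimensional subspaces of `F^n`. -/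
noncomputable def numClassesDimSemi (F : Type) [Field F] (n k : ℕ) : ℕ :=
  Nat.card (Quot (fun V W : {V : Submodule F (Fin n → F) // Module.finrank F V = k} =>
    semiRel F n V.1 W.1))

/-- Number of semilinear equivalence classes of subspaces of `F^n`. -/
noncomputable def numClassesSemi (F : Type) [Field F] (n : ℕ) : ℕ :=
  Nat.card (Quot (fun V W : Submodule F (Fin n → F) => semiRel F n V W))

/-!
Factor `binom(n,k)_q = q^{k(n-k)} K_q(n) / (K_q(k) K_q(n-k))`, where `K_q(n) = KqTrunc q n`, and
use `k(n-k) = (n/2)² - (k - n/2)²`. Then `S(n) K_q / q^{(n/2)²}` is the sum over `k` of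
`q^{-(k-n/2)²}` times `K_q(n) K_q / (K_q(k) K_q(n-k))`. For `n = 2m + r` and `k = m + r + j`
the index `j` runs over a window exhausting `ℤ`, the ratio tends to `1` for fixed `j` and is
at most `1 / K_q`, so dominated convergence gives the limit `∑_j q^{-(j + r/2)²}`: this is
`θ₃(q⁻¹)` for `r = 0` and `θ₂(q⁻¹)` for `r = 1`.
-/

open Finset

lemma summable_rpow_sq_add {x : ℝ} (hx0 : 0 < x) (hx1 : x < 1) (s : ℝ) :
    Summable fun j : ℤ => x ^ (((j : ℝ) + s) ^ 2) := by
  have hgeom : Summable fun j : ℤ => x ^ j.natAbs :=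
    .of_nat_of_neg (by simpa using summable_geometric_of_lt_one hx0.le hx1)
      (by simpa using summable_geometric_of_lt_one hx0.le hx1)
  refine .of_nonneg_of_le (fun j => by positivity) (fun j => ?_) (hgeom.mul_left (x ^ (-(|s| + 1))))
  -- `(t + s)² ≥ |t + s| - 1 ≥ |t| - |s| - 1`
  have hexp : |(j : ℝ)| - (|s| + 1) ≤ ((j : ℝ) + s) ^ 2 := by
    have h1 : |(j : ℝ)| ≤ |(j : ℝ) + s| + |s| := by
      simpa using abs_sub ((j : ℝ) + s) s
    nlinarith [sq_abs ((j : ℝ) + s), sq_nonneg (|(j : ℝ) + s| - 1)]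
  calc x ^ (((j : ℝ) + s) ^ 2) ≤ x ^ (|(j : ℝ)| - (|s| + 1)) :=
        Real.rpow_le_rpow_of_exponent_ge hx0 hx1.le hexp
    _ = x ^ (-(|s| + 1)) * x ^ j.natAbs := by
        rw [sub_eq_neg_add, Real.rpow_add hx0, ← Real.rpow_natCast, Nat.cast_natAbs, Int.cast_abs]

lemma tsum_rpow_sq_add_pos {x : ℝ} (hx0 : 0 < x) (hx1 : x < 1) (s : ℝ) :
    0 < ∑' j : ℤ, x ^ (((j : ℝ) + s) ^ 2) :=
  (summable_rpow_sq_add hx0 hx1 s).tsum_pos (fun j => by positivity) 0 (by positivity)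

lemma tendsto_sum_Icc_of_dominated {E : Type*} [NormedAddCommGroup E] [CompleteSpace E]
    {f : ℕ → ℤ → E} {g : ℤ → E} {bound : ℤ → ℝ} {a b : ℕ → ℤ} (hbound : Summable bound)
    (hle : ∀ m j, ‖f m j‖ ≤ bound j) (hlim : ∀ j, Tendsto (f · j) atTop (𝓝 (g j)))
    (ha : Tendsto a atTop atBot) (hb : Tendsto b atTop atTop) :
    Tendsto (fun m => ∑ j ∈ Icc (a m) (b m), f m j) atTop (𝓝 (∑' j, g j)) := by
  have htsum : ∀ m, ∑ j ∈ Icc (a m) (b m), f m j =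
      ∑' j, if j ∈ Icc (a m) (b m) then f m j else 0 := fun m => by
    rw [tsum_eq_sum (s := Icc (a m) (b m)) fun j hj => if_neg hj, sum_ite_mem, inter_self]
  simp_rw [htsum]
  refine tendsto_tsum_of_dominated_convergence hbound (fun j => ?_) (.of_forall fun m j => ?_)
  · refine (hlim j).congr' ?_
    filter_upwards [ha.eventually_le_atBot j, hb.eventually_ge_atTop j] with m hajm hbjm
    rw [if_pos (mem_Icc.mpr ⟨hajm, hbjm⟩)]
  · split_ifs
    · exact hle m j
    · simpa using (norm_nonneg _).trans (hle m j)

section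

variable {q : ℕ}

lemma inv_natCast_pow_succ_lt_one (hq : 1 < q) (j : ℕ) : (q : ℝ)⁻¹ ^ (j + 1) < 1 :=
  pow_lt_one₀ (by positivity) (inv_lt_one_of_one_lt₀ (by exact_mod_cast hq)) j.succ_ne_zero

lemma summable_inv_natCast_pow_succ (hq : 1 < q) : Summable fun j : ℕ => (q : ℝ)⁻¹ ^ (j + 1) :=
  (summable_geometric_of_lt_one (by positivity)
    (inv_lt_one_of_one_lt₀ (by exact_mod_cast hq))).comp_injective (add_left_injective 1)

lemma hasProd_Kq (hq : 1 < q) : HasProd (fun j : ℕ => 1 - (q : ℝ)⁻¹ ^ (j + 1)) (Kq q) := by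
  simpa only [Kq, sub_eq_add_neg] using
    (Real.multipliable_one_add_of_summable (summable_inv_natCast_pow_succ hq).neg).hasProd

lemma tendsto_KqTrunc (hq : 1 < q) : Tendsto (KqTrunc q) atTop (𝓝 (Kq q)) :=
  (hasProd_Kq hq).tendsto_prod_nat

lemma KqTrunc_pos (hq : 1 < q) (k : ℕ) : 0 < KqTrunc q k :=
  prod_pos fun j _ => sub_pos.mpr (inv_natCast_pow_succ_lt_one hq j)

lemma KqTrunc_le_one (hq : 1 < q) (k : ℕ) : KqTrunc q k ≤ 1 :=
  prod_le_one (fun j _ => (sub_pos.mpr (inv_natCast_pow_succ_lt_one hq j)).le)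
    fun j _ => sub_le_self _ (by positivity)

lemma KqTrunc_antitone (hq : 1 < q) : Antitone (KqTrunc q) :=
  antitone_nat_of_succ_le fun k => by
    rw [KqTrunc, prod_range_succ]
    exact mul_le_of_le_one_right (KqTrunc_pos hq k).le (sub_le_self _ (by positivity))

lemma Kq_le_KqTrunc (hq : 1 < q) (k : ℕ) : Kq q ≤ KqTrunc q k :=
  (KqTrunc_antitone hq).le_of_tendsto (tendsto_KqTrunc hq) k

lemma Kq_pos (hq : 1 < q) : 0 < Kq q := by
  have hlog := Real.summable_log_one_add_of_summable (summable_inv_natCast_pow_succ hq).neg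
  simp only [← sub_eq_add_neg] at hlog
  rw [Kq, ← Real.rexp_tsum_eq_tprod (fun j => sub_pos.mpr (inv_natCast_pow_succ_lt_one hq j)) hlog]
  exact Real.exp_pos _

lemma KqTrunc_div_KqTrunc_sub (hq : 1 < q) {a b : ℕ} (hba : b ≤ a) :
    KqTrunc q a / KqTrunc q (a - b) = ∏ j ∈ range b, (1 - (q : ℝ)⁻¹ ^ (a - j)) := by
  rw [div_eq_iff (KqTrunc_pos hq _).ne', KqTrunc, KqTrunc, show a = (a - b) + b by omega,
    prod_range_add, mul_comm, Nat.add_sub_cancel, ← prod_range_reflect]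
  congr 1
  refine prod_congr rfl fun j hj => ?_
  rw [mem_range] at hj
  congr 2
  omega

lemma qBinom_factor_eq (hq : 1 < q) {n k j : ℕ} (hj : j < k) (hkn : k ≤ n) :
    ((q : ℝ) ^ (n - j) - 1) / ((q : ℝ) ^ (k - j) - 1) =
      (q : ℝ) ^ (n - k) * ((1 - (q : ℝ)⁻¹ ^ (n - j)) / (1 - (q : ℝ)⁻¹ ^ (k - j))) := by
  have hq0 : (q : ℝ) ≠ 0 := by positivity
  have hsub : ∀ a : ℕ, (q : ℝ) ^ a - 1 = (q : ℝ) ^ a * (1 - (q : ℝ)⁻¹ ^ a) := fun a => by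
    rw [mul_sub, mul_one, ← mul_pow, mul_inv_cancel₀ hq0, one_pow]
  have hpos : 0 < 1 - (q : ℝ)⁻¹ ^ (k - j) := by
    rw [show k - j = k - j - 1 + 1 by omega]
    exact sub_pos.mpr (inv_natCast_pow_succ_lt_one hq _)
  rw [hsub, hsub, show n - j = (n - k) + (k - j) by omega, pow_add]
  field_simp

/-- The second factor is the Gaussian binomial `binom(n,k)_{q⁻¹}`. -/
theorem qBinom_eq (hq : 1 < q) {n k : ℕ} (hkn : k ≤ n) :
    qBinom q n k = (q : ℝ) ^ (k * (n - k)) * (KqTrunc q n / (KqTrunc q k * KqTrunc q (n - k))) := by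
  have hK0 : KqTrunc q 0 = 1 := prod_range_zero _
  rw [qBinom, prod_congr rfl fun j hj => qBinom_factor_eq hq (mem_range.mp hj) hkn,
    prod_mul_distrib, prod_const, card_range, prod_div_distrib,
    ← KqTrunc_div_KqTrunc_sub hq hkn, ← KqTrunc_div_KqTrunc_sub hq le_rfl, Nat.sub_self, hK0,
    div_one, ← pow_mul, mul_comm (n - k), div_div, mul_comm (KqTrunc q (n - k))]

lemma qBinom_mul_Kq_div_rpow (hq : 1 < q) {n k : ℕ} (hkn : k ≤ n) :
    qBinom q n k * Kq q / (q : ℝ) ^ (((n : ℝ) / 2) ^ 2) =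
      (q : ℝ)⁻¹ ^ (((k : ℝ) - n / 2) ^ 2) *
        (KqTrunc q n * Kq q / (KqTrunc q k * KqTrunc q (n - k))) := by
  have hq0 : (0 : ℝ) < q := by positivity
  have hexp : (q : ℝ) ^ (k * (n - k)) / (q : ℝ) ^ (((n : ℝ) / 2) ^ 2) =
      (q : ℝ)⁻¹ ^ (((k : ℝ) - n / 2) ^ 2) := by
    rw [← Real.rpow_natCast, ← Real.rpow_sub hq0, Real.inv_rpow hq0.le, ← Real.rpow_neg hq0.le]
    congr 1
    push_cast [hkn]
    ring
  rw [qBinom_eq hq hkn, ← hexp]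
  ring

lemma KqTrunc_mul_Kq_div_le (hq : 1 < q) (n k l : ℕ) :
    KqTrunc q n * Kq q / (KqTrunc q k * KqTrunc q l) ≤ (Kq q)⁻¹ := by
  have hK := Kq_pos hq
  have hn := KqTrunc_le_one hq n
  have hk := Kq_le_KqTrunc hq k
  have hl := Kq_le_KqTrunc hq l
  calc KqTrunc q n * Kq q / (KqTrunc q k * KqTrunc q l)
      ≤ 1 * Kq q / (Kq q * Kq q) := by gcongr; exact hK.le.trans hk
    _ = (Kq q)⁻¹ := by field_simp

lemma tendsto_KqTrunc_mul_Kq_div (hq : 1 < q) {n k l : ℕ → ℕ} (hn : Tendsto n atTop atTop)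
    (hk : Tendsto k atTop atTop) (hl : Tendsto l atTop atTop) :
    Tendsto (fun m => KqTrunc q (n m) * Kq q / (KqTrunc q (k m) * KqTrunc q (l m))) atTop
      (𝓝 1) := by
  have hK := (Kq_pos hq).ne'
  have hlim := (((tendsto_KqTrunc hq).comp hn).mul_const (Kq q)).div
    (((tendsto_KqTrunc hq).comp hk).mul ((tendsto_KqTrunc hq).comp hl)) (mul_ne_zero hK hK)
  rwa [div_self (mul_ne_zero hK hK)] at hlim

lemma Sq_mul_Kq_div_rpow_eq_sum (hq : 1 < q) (m r : ℕ) :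
    Sq q (2 * m + r) * Kq q / (q : ℝ) ^ (((m : ℝ) + r / 2) ^ 2) =
      ∑ j ∈ Icc (-((m + r : ℕ) : ℤ)) m, (q : ℝ)⁻¹ ^ (((j : ℝ) + r / 2) ^ 2) *
        (KqTrunc q (2 * m + r) * Kq q /
          (KqTrunc q (m + r + j).toNat * KqTrunc q (m - j).toNat)) := by
  have hcenter : (m : ℝ) + r / 2 = ((2 * m + r : ℕ) : ℝ) / 2 := by push_cast; ring
  rw [Sq, sum_mul, sum_div, hcenter]
  refine sum_nbij' (fun k => (k : ℤ) - (m + r : ℕ)) (fun j => (m + r + j).toNat)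
    (fun k hk => by simp only [mem_range, mem_Icc] at hk ⊢; omega)
    (fun j hj => by simp only [mem_range, mem_Icc] at hj ⊢; omega)
    (fun k hk => by simp only [mem_range] at hk; omega)
    (fun j hj => by simp only [mem_Icc] at hj; omega) fun k hk => ?_
  rw [mem_range] at hk
  rw [qBinom_mul_Kq_div_rpow hq (by omega),
    show (m + r + ((k : ℤ) - (m + r : ℕ))).toNat = k by omega, show (m - ((k : ℤ) - (m + r : ℕ))).toNat = 2 * m + r - k by omega]
  push_cast
  ring_nf

theorem tendsto_Sq_mul_Kq_div_rpow (hq : 1 < q) (r : ℕ) :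
    Tendsto (fun m : ℕ => Sq q (2 * m + r) * Kq q / (q : ℝ) ^ (((m : ℝ) + r / 2) ^ 2)) atTop
      (𝓝 (∑' j : ℤ, (q : ℝ)⁻¹ ^ (((j : ℝ) + r / 2) ^ 2))) := by
  have hx0 : (0 : ℝ) < (q : ℝ)⁻¹ := by positivity
  simp_rw [Sq_mul_Kq_div_rpow_eq_sum hq]
  refine tendsto_sum_Icc_of_dominated
    (bound := fun j : ℤ => (q : ℝ)⁻¹ ^ (((j : ℝ) + r / 2) ^ 2) * (Kq q)⁻¹)
    ((summable_rpow_sq_add hx0 (inv_lt_one_of_one_lt₀ (by exact_mod_cast hq)) _).mul_right _)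
    (fun m j => ?_) (fun j => ?_) ?_ ?_
  · have hratio : 0 ≤ KqTrunc q (2 * m + r) * Kq q /
        (KqTrunc q (m + r + j).toNat * KqTrunc q (m - j).toNat) :=
      div_nonneg (mul_pos (KqTrunc_pos hq _) (Kq_pos hq)).le
        (mul_pos (KqTrunc_pos hq _) (KqTrunc_pos hq _)).le
    rw [norm_mul, Real.norm_of_nonneg (by positivity), Real.norm_of_nonneg hratio]
    exact mul_le_mul_of_nonneg_left (KqTrunc_mul_Kq_div_le hq _ _ _) (by positivity)
  · have hratio := tendsto_KqTrunc_mul_Kq_div hq (n := fun m => 2 * m + r)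
      (k := fun m => ((m : ℤ) + r + j).toNat) (l := fun m => ((m : ℤ) - j).toNat)
      (tendsto_atTop_atTop.mpr fun c => ⟨c, fun m hm => by omega⟩)
      (tendsto_atTop_atTop.mpr fun c => ⟨c + j.natAbs, fun m hm => by omega⟩)
      (tendsto_atTop_atTop.mpr fun c => ⟨c + j.natAbs, fun m hm => by omega⟩)
    simpa using hratio.const_mul ((q : ℝ)⁻¹ ^ (((j : ℝ) + r / 2) ^ 2))
  · exact tendsto_neg_atTop_atBot.comp (tendsto_natCast_atTop_atTop.comp (tendsto_add_atTop_nat r))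
  · exact tendsto_natCast_atTop_atTop

end

theorem stmt19 (q : ℕ) (hq : IsPrimePow q) :
    Tendsto (fun m : ℕ => Sq q (2 * m) * Kq q / (theta3 ((q : ℝ))⁻¹ * (q : ℝ) ^ (m ^ 2)))
      atTop (𝓝 1) ∧
    Tendsto (fun m : ℕ =>
        Sq q (2 * m + 1) * Kq q / (theta2 ((q : ℝ))⁻¹ * (q : ℝ) ^ (((m : ℝ) + 1 / 2) ^ 2)))
      atTop (𝓝 1) := by
  have hq1 := hq.one_lt
  have hx0 : (0 : ℝ) < (q : ℝ)⁻¹ := by positivity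
  have hx1 : (q : ℝ)⁻¹ < 1 := inv_lt_one_of_one_lt₀ (by exact_mod_cast hq1)
  have h3 : Tendsto (fun m : ℕ => Sq q (2 * m) * Kq q / (q : ℝ) ^ (m ^ 2)) atTop
      (𝓝 (theta3 (q : ℝ)⁻¹)) := by
    have h := tendsto_Sq_mul_Kq_div_rpow hq1 0
    simp only [add_zero, Nat.cast_zero, zero_div] at h
    refine h.congr fun m => ?_
    rw [← Real.rpow_natCast (q : ℝ) (m ^ 2), Nat.cast_pow]
  have h2 : Tendsto (fun m : ℕ => Sq q (2 * m + 1) * Kq q / (q : ℝ) ^ (((m : ℝ) + 1 / 2) ^ 2))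
      atTop (𝓝 (theta2 (q : ℝ)⁻¹)) := by
    rw [theta2]
    simpa only [Nat.cast_one] using tendsto_Sq_mul_Kq_div_rpow hq1 1
  have hθ3 : theta3 (q : ℝ)⁻¹ ≠ 0 := by
    rw [theta3]
    simpa only [Nat.cast_zero, zero_div, add_zero] using (tsum_rpow_sq_add_pos hx0 hx1 0).ne'
  have hθ2 : theta2 (q : ℝ)⁻¹ ≠ 0 := (tsum_rpow_sq_add_pos hx0 hx1 _).ne'
  constructor
  · simpa only [div_self hθ3, div_div, mul_comm] using h3.div_const (theta3 (q : ℝ)⁻¹)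
  · simpa only [div_self hθ2, div_div, mul_comm] using h2.div_const (theta2 (q : ℝ)⁻¹)
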